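/- arXiv:1110.2076 — 2 statements merged into one kernel-verified Lean document; each statement's English description precedes it below -/
import Mathlib

section
/- Fix integers m ≥ 1, l ≥ 1 and j with 1 ≤ j ≤ m. Work in ℂ[x_1,…,x_m], and let e_1,…,e_m be the elementary symmetric polynomials, p_l = x_1^l + ⋯ + x_m^l the l-th power sum, and h_k the complete homogeneous symmetric polynomial of degree k. Let p_{m,l} and h_{m,k} (for k ≥ 0) be the unique polynomials in m variables X_1,…,X_m over ℂ satisfying p_{m,l}(e_1,…,e_m) = p_l and h_{m,k}(e_1,…,e_m) = h_k, and set h_{m,k} = 0 for k < 0. Then ∂p_{m,l}/∂X_j = (−1)^{j+1} · l · h_{m,l−j}(X_1,…,X_m). -/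
/-!
With `E(t) = ∑ₖ (-1)ᵏ eₖ tᵏ` and `H(t) = ∑ₖ hₖ tᵏ` we have `E H = 1`, and Newton's identities
say `∑_{k ≥ 1} pₖ tᵏ = -t E'(t) H(t)`. Both identities pull back along the injective map
`Xₖ ↦ eₖ`, with `E` replaced by `Ê(t) = 1 + ∑ₖ (-1)ᵏ Xₖ tᵏ` and `H` by `∑ₖ h_{m,k} tᵏ`.
Differentiating coefficientwise in `X_j` commutes with `d/dt`, and since `Ê Ĥ = 1` it commutes
with taking the logarithmic derivative, so
`∂_j (-t Ê' Ĥ) = -t d/dt (∂_j Ê · Ĥ) = (-1)^{j+1} t d/dt (tʲ Ĥ)`,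
whose coefficient of `tˡ` is `(-1)^{j+1} l h_{m,l-j}`.
-/

open MvPolynomial PowerSeries Finset

/-- When `u * v = 1`, `D u * v` is the logarithmic derivative of `u`. -/
theorem Derivation.apply_logDeriv_comm {R₁ R₂ A : Type*} [CommRing R₁] [CommRing R₂]
    [CommRing A] [Algebra R₁ A] [Algebra R₂ A] (D₁ : Derivation R₁ A A) (D₂ : Derivation R₂ A A)
    (hD : ∀ a, D₁ (D₂ a) = D₂ (D₁ a)) {u v : A} (huv : u * v = 1) :
    D₁ (D₂ u * v) = D₂ (D₁ u * v) := by
  have h₁ := congrArg D₁ huv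
  have h₂ := congrArg D₂ huv
  simp only [Derivation.leibniz, Derivation.map_one_eq_zero, smul_eq_mul] at h₁ h₂ ⊢
  rw [hD]
  linear_combination (v * D₂ u) * h₁ - (v * D₁ u) * h₂ - (D₂ u * D₁ v - D₁ u * D₂ v) * huv

theorem Multiset.prod_map_eq_prod_pow_count {ι M : Type*} [Fintype ι] [DecidableEq ι]
    [CommMonoid M] (s : Multiset ι) (f : ι → M) :
    (s.map f).prod = ∏ i, f i ^ s.count i := by
  rw [Finset.prod_multiset_map_count]
  exact Finset.prod_subset (Finset.subset_univ _) fun i _ hi => by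
    rw [Multiset.count_eq_zero.mpr (by simpa using hi), pow_zero]

namespace PowerSeries

theorem coeff_X_mul_derivative {A : Type*} [CommRing A] (f : A⟦X⟧) (n : ℕ) :
    coeff n (X * d⁄dX A f) = n * coeff n f := by
  cases n with
  | zero => simp
  | succ n => rw [coeff_succ_X_mul, coeff_derivative, mul_comm]; push_cast; rfl

theorem map_derivative {S T : Type*} [CommRing S] [CommRing T] (φ : S →+* T) (f : S⟦X⟧) :
    map φ (d⁄dX S f) = d⁄dX T (map φ f) := by
  ext n
  simp [coeff_derivative]

end PowerSeries

namespace Derivation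

variable {R A : Type*} [CommRing R] [CommRing A] [Algebra R A] (d : Derivation R A A)

noncomputable def powerSeriesMapCoeffs : Derivation R A⟦X⟧ A⟦X⟧ where
  toFun f := PowerSeries.mk fun n => d (coeff n f)
  map_add' f g := by ext; simp
  map_smul' r f := by ext; simp
  map_one_eq_zero' := by ext n; simp [PowerSeries.coeff_one, apply_ite d]
  leibniz' f g := by
    ext n
    rw [smul_eq_mul, smul_eq_mul, mul_comm g, map_add, PowerSeries.coeff_mul,
      PowerSeries.coeff_mul]
    simp [PowerSeries.coeff_mul, Finset.sum_add_distrib, mul_comm]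

@[simp]
theorem coeff_powerSeriesMapCoeffs (f : A⟦X⟧) (n : ℕ) :
    coeff n (d.powerSeriesMapCoeffs f) = d (coeff n f) := by
  simp [powerSeriesMapCoeffs]

theorem powerSeriesMapCoeffs_derivative (f : A⟦X⟧) :
    d.powerSeriesMapCoeffs (d⁄dX A f) = d⁄dX A (d.powerSeriesMapCoeffs f) := by
  ext n
  simp [coeff_derivative, mul_comm]

@[simp]
theorem powerSeriesMapCoeffs_X : d.powerSeriesMapCoeffs (PowerSeries.X : A⟦X⟧) = 0 := by
  ext n
  simp [PowerSeries.coeff_X, apply_ite d]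

theorem apply_coeff_neg_X_mul_derivative_mul {E B : A⟦X⟧} (hEB : E * B = 1) (n : ℕ) :
    d (coeff n (-(PowerSeries.X * d⁄dX A E) * B))
      = -(n * coeff n (d.powerSeriesMapCoeffs E * B)) := by
  rw [← coeff_powerSeriesMapCoeffs, neg_mul, map_neg, mul_assoc, leibniz,
    powerSeriesMapCoeffs_X, smul_zero, add_zero, smul_eq_mul,
    apply_logDeriv_comm _ _ d.powerSeriesMapCoeffs_derivative hEB, map_neg,
    coeff_X_mul_derivative]

end Derivation

namespace MvPolynomial

section SymmetricSeries

variable (σ R : Type*) [Fintype σ] [CommRing R]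

theorem hsymm_eq_sum_finsuppAntidiag [DecidableEq σ] (n : ℕ) :
    hsymm σ R n = ∑ l ∈ Finset.univ.finsuppAntidiag n, ∏ i, X i ^ l i := by
  refine Finset.sum_bij' (fun s _ => Multiset.toFinsupp (s : Multiset σ))
    (fun l hl => ⟨Finsupp.toMultiset l, ?_⟩) ?_ (fun _ _ => Finset.mem_univ _) ?_ ?_ ?_
  · simpa [Finset.mem_finsuppAntidiag, Finsupp.sum_fintype] using hl
  · intro s _
    rw [Finset.mem_finsuppAntidiag]
    exact ⟨(Multiset.sum_count_eq_card fun i _ => Finset.mem_univ i).trans s.2,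
      Finset.subset_univ _⟩
  · exact fun s _ => Sym.coe_injective (by simp)
  · simp
  · simp [Multiset.prod_map_eq_prod_pow_count]

noncomputable def esymmSeries : (MvPolynomial σ R)⟦X⟧ :=
  PowerSeries.mk fun n => (-1) ^ n * esymm σ R n

noncomputable def hsymmSeries [DecidableEq σ] : (MvPolynomial σ R)⟦X⟧ :=
  PowerSeries.mk fun n => hsymm σ R n

noncomputable def psumSeries : (MvPolynomial σ R)⟦X⟧ :=
  PowerSeries.mk fun n => if n = 0 then 0 else psum σ R n

theorem esymmSeries_eq_prod :
    esymmSeries σ R = ∏ i, (1 - PowerSeries.C (X i) * PowerSeries.X) := by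
  have hprod (t : Finset σ) : ∏ i ∈ t, -(PowerSeries.C (X i : MvPolynomial σ R) * PowerSeries.X)
      = PowerSeries.C ((-1) ^ t.card * ∏ i ∈ t, X i) * PowerSeries.X ^ t.card := by
    simp [Finset.prod_neg, Finset.prod_mul_distrib, mul_assoc]
  refine PowerSeries.ext fun n => ?_
  simp_rw [sub_eq_add_neg, add_comm (1 : (MvPolynomial σ R)⟦X⟧), Finset.prod_add_one, hprod,
    map_sum, coeff_C_mul_X_pow, esymmSeries, coeff_mk, esymm, Finset.mul_sum]
  rw [Finset.powersetCard_eq_filter, Finset.sum_filter]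
  refine Finset.sum_congr rfl fun t _ => ?_
  split_ifs <;> simp_all

theorem hsymmSeries_eq_prod [DecidableEq σ] :
    hsymmSeries σ R = ∏ i, rescale (X i) (PowerSeries.mk 1) := by
  refine PowerSeries.ext fun n => ?_
  simp [hsymmSeries, coeff_prod, hsymm_eq_sum_finsuppAntidiag]

theorem esymmSeries_mul_hsymmSeries [DecidableEq σ] :
    esymmSeries σ R * hsymmSeries σ R = 1 := by
  rw [esymmSeries_eq_prod, hsymmSeries_eq_prod, ← Finset.prod_mul_distrib]
  refine Finset.prod_eq_one fun i _ => ?_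
  rw [← rescale_X, ← map_one (rescale (X i)), ← map_sub, ← map_mul, mul_comm,
    mk_one_mul_one_sub_eq_one, map_one]

theorem neg_X_mul_derivative_esymmSeries :
    -(PowerSeries.X * d⁄dX _ (esymmSeries σ R)) = esymmSeries σ R * psumSeries σ R := by
  refine PowerSeries.ext fun n => ?_
  have hsum : ∑ a ∈ antidiagonal n, (-1) ^ a.1 * esymm σ R a.1 *
        (if a.2 = 0 then 0 else psum σ R a.2)
      = ∑ a ∈ antidiagonal n with a.1 < n, (-1) ^ a.1 * esymm σ R a.1 * psum σ R a.2 := by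
    rw [Finset.sum_filter]
    refine Finset.sum_congr rfl fun a ha => ?_
    have := mem_antidiagonal.mp ha
    split_ifs <;> first | omega | simp
  have hsign : ((-1) ^ n * (-1) ^ n : MvPolynomial σ R) = 1 := by
    rw [← mul_pow, neg_one_mul, neg_neg, one_pow]
  rw [map_neg, coeff_X_mul_derivative, PowerSeries.coeff_mul]
  simp only [esymmSeries, psumSeries, coeff_mk]
  rw [hsum]
  linear_combination (-(-1) ^ n : MvPolynomial σ R) * mul_esymm_eq_sum σ R n
    + (∑ a ∈ antidiagonal n with a.1 < n, (-1) ^ a.1 * esymm σ R a.1 * psum σ R a.2) * hsign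

end SymmetricSeries

section FinVars

variable (m : ℕ) (R : Type*) [CommRing R]

noncomputable abbrev esymmAeval : MvPolynomial (Fin m) R →ₐ[R] MvPolynomial (Fin m) R :=
  aeval fun r : Fin m => esymm (Fin m) R ((r : ℕ) + 1)

/-- The preimage of `e_k` under `X_r ↦ e_{r+1}`; the values at `k = 0` and `k > m` reflect
`e_0 = 1` and `e_k = 0` for `k > m`. -/
noncomputable def esymmVar : ℕ → MvPolynomial (Fin m) R
  | 0 => 1
  | k + 1 => if h : k < m then X ⟨k, h⟩ else 0

noncomputable def esymmVarSeries : (MvPolynomial (Fin m) R)⟦X⟧ :=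
  PowerSeries.mk fun k => (-1) ^ k * esymmVar m R k

theorem esymmAeval_injective : Function.Injective (esymmAeval m R) :=
  fun p q h => esymmAlgHom_fin_injective R le_rfl <|
    Subtype.ext (by simpa only [esymmAlgHom_apply] using h)

theorem esymmAeval_esymmVar (k : ℕ) : esymmAeval m R (esymmVar m R k) = esymm (Fin m) R k := by
  cases k with
  | zero => simp [esymmVar, esymm_zero]
  | succ k =>
    by_cases h : k < m
    · simp [esymmVar, h]
    · rw [esymmVar, dif_neg h, map_zero, esymm,
        Finset.powersetCard_eq_empty.mpr (by simpa using h), Finset.sum_empty]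

theorem pderiv_esymmVar (i : Fin m) (k : ℕ) :
    pderiv i (esymmVar m R k) = if k = (i : ℕ) + 1 then 1 else 0 := by
  cases k with
  | zero => simp [esymmVar]
  | succ k =>
    by_cases h : k < m
    · simp [esymmVar, h, pderiv_X, Pi.single_apply, Fin.ext_iff]
    · rw [esymmVar, dif_neg h, map_zero, if_neg (by omega)]

theorem map_esymmVarSeries :
    PowerSeries.map (esymmAeval m R).toRingHom (esymmVarSeries m R) = esymmSeries (Fin m) R := by
  ext k : 1
  rw [PowerSeries.coeff_map, esymmVarSeries, esymmSeries, coeff_mk, coeff_mk,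
    AlgHom.toRingHom_eq_coe, RingHom.coe_coe, map_mul, map_pow, map_neg, map_one,
    esymmAeval_esymmVar]

theorem powerSeriesMapCoeffs_pderiv_esymmVarSeries (i : Fin m) :
    (pderiv i).powerSeriesMapCoeffs (esymmVarSeries m R)
      = PowerSeries.C ((-1) ^ ((i : ℕ) + 1)) * PowerSeries.X ^ ((i : ℕ) + 1) := by
  ext k : 1
  rw [PowerSeries.coeff_C_mul_X_pow]
  split_ifs with h <;> simp [esymmVarSeries, pderiv_esymmVar, h]

variable {m R}

theorem map_mk_eq_hsymmSeries {H : ℕ → MvPolynomial (Fin m) R}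
    (hH : ∀ k, esymmAeval m R (H k) = hsymm (Fin m) R k) :
    PowerSeries.map (esymmAeval m R).toRingHom (PowerSeries.mk H) = hsymmSeries (Fin m) R := by
  ext k : 1
  rw [PowerSeries.coeff_map, hsymmSeries, coeff_mk, coeff_mk, AlgHom.toRingHom_eq_coe,
    RingHom.coe_coe, hH]

theorem esymmVarSeries_mul_mk_eq_one {H : ℕ → MvPolynomial (Fin m) R}
    (hH : ∀ k, esymmAeval m R (H k) = hsymm (Fin m) R k) :
    esymmVarSeries m R * PowerSeries.mk H = 1 :=
  PowerSeries.map_injective _ (esymmAeval_injective m R) <| by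
    rw [map_mul, map_one, map_esymmVarSeries, map_mk_eq_hsymmSeries hH,
      esymmSeries_mul_hsymmSeries]

theorem eq_coeff_neg_X_mul_derivative_esymmVarSeries_mul {l : ℕ} (hl : l ≠ 0)
    {P : MvPolynomial (Fin m) R} {H : ℕ → MvPolynomial (Fin m) R}
    (hP : esymmAeval m R P = psum (Fin m) R l)
    (hH : ∀ k, esymmAeval m R (H k) = hsymm (Fin m) R k) :
    P = PowerSeries.coeff l
      (-(PowerSeries.X * d⁄dX _ (esymmVarSeries m R)) * PowerSeries.mk H) := by
  have hmap : PowerSeries.map (esymmAeval m R).toRingHom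
      (-(PowerSeries.X * d⁄dX _ (esymmVarSeries m R)) * PowerSeries.mk H)
      = psumSeries (Fin m) R := by
    rw [map_mul, map_neg, map_mul, PowerSeries.map_X, PowerSeries.map_derivative,
      map_esymmVarSeries, map_mk_eq_hsymmSeries hH, neg_X_mul_derivative_esymmSeries,
      mul_right_comm, esymmSeries_mul_hsymmSeries, one_mul]
  have hcoeff := congrArg (PowerSeries.coeff l) hmap
  rw [PowerSeries.coeff_map, psumSeries, coeff_mk, if_neg hl, ← hP] at hcoeff
  exact esymmAeval_injective m R hcoeff.symm

end FinVars

end MvPolynomial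

theorem power_sum_partial_derivative_general
    (m l : ℕ) (hl : 1 ≤ l) (i : Fin m)
    (P : MvPolynomial (Fin m) ℂ) (H : ℤ → MvPolynomial (Fin m) ℂ)
    -- `P` expresses the `l`-th power sum in terms of the elementary symmetric polynomials
    (hP : aeval (fun r : Fin m => esymm (Fin m) ℂ ((r : ℕ) + 1)) P = psum (Fin m) ℂ l)
    -- `H k` expresses the complete homogeneous symmetric polynomial of degree `k ≥ 0`
    (hH : ∀ k : ℕ, aeval (fun r : Fin m => esymm (Fin m) ℂ ((r : ℕ) + 1)) (H k)
            = hsymm (Fin m) ℂ k)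
    -- and `H k = 0` for `k < 0`
    (hHneg : ∀ k : ℤ, k < 0 → H k = 0) :
    pderiv i P
      = (-1 : MvPolynomial (Fin m) ℂ) ^ (((i : ℕ) + 1) + 1) * (l : MvPolynomial (Fin m) ℂ)
          * H ((l : ℤ) - ((i : ℕ) + 1)) := by
  rw [eq_coeff_neg_X_mul_derivative_esymmVarSeries_mul (by omega) hP hH,
    Derivation.apply_coeff_neg_X_mul_derivative_mul _ (esymmVarSeries_mul_mk_eq_one hH),
    powerSeriesMapCoeffs_pderiv_esymmVarSeries, mul_assoc, PowerSeries.coeff_C_mul,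
    PowerSeries.coeff_X_pow_mul', PowerSeries.coeff_mk]
  split_ifs with hil
  · rw [show (l : ℤ) - ((i : ℕ) + 1) = ((l - ((i : ℕ) + 1) : ℕ) : ℤ) by omega]
    ring
  · rw [hHneg _ (by omega)]
    simp

theorem power_sum_partial_derivative
    (m l : ℕ) (hm : 1 ≤ m) (hl : 1 ≤ l) (i : Fin m)
    (P : MvPolynomial (Fin m) ℂ) (H : ℤ → MvPolynomial (Fin m) ℂ)
    -- `P` expresses the `l`-th power sum in terms of the elementary symmetric polynomials
    (hP : aeval (fun r : Fin m => esymm (Fin m) ℂ ((r : ℕ) + 1)) P = psum (Fin m) ℂ l)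
    -- `H k` expresses the complete homogeneous symmetric polynomial of degree `k ≥ 0`
    (hH : ∀ k : ℕ, aeval (fun r : Fin m => esymm (Fin m) ℂ ((r : ℕ) + 1)) (H k)
            = hsymm (Fin m) ℂ k)
    -- and `H k = 0` for `k < 0`
    (hHneg : ∀ k : ℤ, k < 0 → H k = 0) :
    pderiv i P
      = (-1 : MvPolynomial (Fin m) ℂ) ^ (((i : ℕ) + 1) + 1) * (l : MvPolynomial (Fin m) ℂ)
          * H ((l : ℤ) - ((i : ℕ) + 1)) :=
  power_sum_partial_derivative_general m l hl i P H hP hH hHneg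
end

section
/- Fix an integer N ≥ 1 and integers m, n ≥ 0 with m + n ≤ N. Then for every subset A ⊆ 𝒩 with #A = m, one has in ℤ[q, q^{−1}]: Σ over subsets B ⊆ 𝒩∖A with #B = n of q^{mn − 2·π(A,B) − Σ_{b∈B} b} equals the quantum binomial coefficient [N−m choose n]. (This identity verifies MOY relation (4), the loop relation, for the Murakami–Ohtsuki–Yamada state sum.) -/
/-!
Statement 14: Fix `N ≥ 1` and `m, n ≥ 0` with `m + n ≤ N`, and let
`𝒩 = {−N+1, −N+3, …, N−1}`.  Then for every subset `A ⊆ 𝒩` with `#A = m`, in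
`ℤ[q, q⁻¹]`,
`Σ_{B ⊆ 𝒩∖A, #B = n} q^{mn − 2·π(A,B) − Σ_{b ∈ B} b} = [N−m choose n]`,
where `π(A₁, A₂) = #{(a₁,a₂) ∈ A₁ × A₂ : a₁ > a₂}`.  This verifies MOY relation (4)
(the loop relation) for the Murakami–Ohtsuki–Yamada state sum.

Quantum integers are represented by their closed form
`[j] = q^{j−1} + q^{j−3} + ⋯ + q^{−(j−1)}` (which equals `(q^j − q^{−j})/(q − q^{−1})`),
and the identity `Σ = [N−m]!/([n]!·[N−m−n]!)` is stated with denominators cleared: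
`Σ · [n]! · [N−m−n]! = [N−m]!` (which determines the quantum binomial uniquely, since
`ℤ[q,q⁻¹]` is an integral domain).
-/

open LaurentPolynomial

/-- The quantum integer `[j] = (q^j − q^{−j})/(q − q^{−1}) = Σ_{i=0}^{j−1} q^{2i−j+1}`
as a Laurent polynomial. -/
noncomputable def qInt (j : ℕ) : LaurentPolynomial ℤ :=
  ∑ i ∈ Finset.range j, T (2 * (i : ℤ) - (j : ℤ) + 1)

/-- The quantum factorial `[j]! = [1][2]⋯[j]`. -/
noncomputable def qFact (j : ℕ) : LaurentPolynomial ℤ :=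
  ∏ i ∈ Finset.range j, qInt (i + 1)

/-- The set `𝒩 = {−N+1, −N+3, …, N−3, N−1}` of `N` integers. -/
def moySet (N : ℕ) : Finset ℤ :=
  (Finset.range N).image fun i : ℕ => 2 * (i : ℤ) - (N : ℤ) + 1

/-- `π(A₁, A₂) = #{(a₁, a₂) ∈ A₁ × A₂ : a₁ > a₂}`. -/
def moyPi (A₁ A₂ : Finset ℤ) : ℕ :=
  ((A₁ ×ˢ A₂).filter fun p => p.2 < p.1).card

/-!
Weight each element `b` of a finite linearly ordered set `C` by its rank balance: the number of
elements of `C` above `b` minus the number below it. The sum of `q^(total weight)` over the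
`n`-subsets of `C` is the quantum binomial `[#C choose n]`: removing the maximum of `C` gives the
`q`-Pascal recursion. For `b ∈ 𝒩 ∖ A`, the exponent `m − 2·#{a ∈ A : a > b} − b` is exactly the
rank balance of `b` in `C = 𝒩 ∖ A`: its rank balance in `𝒩 = A ⊔ C` is `−b`, and its rank
balance in `A` is `2·#{a ∈ A : a > b} − m`.
-/

open Finset

lemma qFact_zero : qFact 0 = 1 := prod_range_zero _

lemma qFact_succ (j : ℕ) : qFact (j + 1) = qFact j * qInt (j + 1) := prod_range_succ _ _

lemma qInt_add (a b : ℕ) : qInt (a + b) = T (-(b : ℤ)) * qInt a + T a * qInt b := by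
  simp only [qInt, sum_range_add, mul_sum, ← T_add]
  congr 1 <;> refine sum_congr rfl fun i _ => ?_ <;> push_cast <;> ring_nf

section RankBalance

variable {α : Type*} [LinearOrder α]

def rankBalance (s : Finset α) (b : α) : ℤ := #{c ∈ s | b < c} - #{c ∈ s | c < b}

lemma rankBalance_sdiff {s t : Finset α} (h : s ⊆ t) (b : α) :
    rankBalance (t \ s) b = rankBalance t b - rankBalance s b := by
  have hcard (p : α → Prop) [DecidablePred p] :
      #{c ∈ t \ s | p c} + #{c ∈ s | p c} = #{c ∈ t | p c} := by
    rw [← card_union_of_disjoint (disjoint_filter_filter sdiff_disjoint), ← filter_union,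
      sdiff_union_of_subset h]
  have h₁ := hcard (b < ·)
  have h₂ := hcard (· < b)
  simp only [rankBalance]
  omega

lemma rankBalance_of_notMem {s : Finset α} {b : α} (hb : b ∉ s) :
    rankBalance s b = 2 * #{c ∈ s | b < c} - #s := by
  have hsplit : #s = #{c ∈ s | b < c} + #{c ∈ s | c < b} := by
    rw [← card_union_of_disjoint (disjoint_filter.2 fun _ _ h => h.not_gt), ← filter_or]
    congr 1
    exact (filter_true_of_mem fun c hc => (ne_of_mem_of_not_mem hc hb).lt_or_gt.symm).symm
  rw [rankBalance, hsplit]; push_cast; ring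

variable {s : Finset α} {x : α}

lemma rankBalance_insert_max (hx : ∀ c ∈ s, c < x) {b : α} (hb : b ∈ s) :
    rankBalance (insert x s) b = rankBalance s b + 1 := by
  rw [rankBalance, rankBalance, filter_insert, filter_insert, if_pos (hx b hb),
    if_neg (hx b hb).not_gt, card_insert_of_notMem fun h => (hx x (mem_filter.1 h).1).false]
  push_cast; ring

lemma rankBalance_insert_max_self (hx : ∀ c ∈ s, c < x) :
    rankBalance (insert x s) x = -#s := by
  rw [rankBalance, filter_insert, filter_insert, if_neg (lt_irrefl x), if_neg (lt_irrefl x),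
    filter_false_of_mem fun c hc => (hx c hc).not_gt, filter_true_of_mem hx]
  simp

noncomputable def qSubsetCount (s : Finset α) (n : ℕ) : LaurentPolynomial ℤ :=
  ∑ B ∈ s.powersetCard n, T (∑ b ∈ B, rankBalance s b)

lemma sum_rankBalance_insert_max (hx : ∀ c ∈ s, c < x) {B : Finset α} (hB : B ⊆ s) :
    ∑ b ∈ B, rankBalance (insert x s) b = ∑ b ∈ B, rankBalance s b + #B := by
  rw [sum_congr rfl fun b hb => rankBalance_insert_max hx (hB hb), sum_add_distrib]
  simp

lemma qSubsetCount_insert_max_succ (hx : ∀ c ∈ s, c < x) (k : ℕ) :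
    qSubsetCount (insert x s) (k + 1) =
      T (k + 1) * qSubsetCount s (k + 1) + T (k - #s) * qSubsetCount s k := by
  have hxs : x ∉ s := fun h => (hx x h).false
  rw [qSubsetCount, powersetCard_succ_insert hxs, sum_union, sum_image, qSubsetCount,
    qSubsetCount, mul_sum, mul_sum]
  · congr 1 <;> refine sum_congr rfl fun B hB => ?_ <;>
      obtain ⟨hBs, hBcard⟩ := mem_powersetCard.1 hB
    · rw [← T_add, sum_rankBalance_insert_max hx hBs, hBcard]; push_cast; ring_nf
    · rw [← T_add, sum_insert fun h => hxs (hBs h), rankBalance_insert_max_self hx,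
        sum_rankBalance_insert_max hx hBs, hBcard]; ring_nf
  · intro B₁ hB₁ B₂ hB₂ h
    have hx₁ : x ∉ B₁ := fun h => hxs ((mem_powersetCard.1 hB₁).1 h)
    have hx₂ : x ∉ B₂ := fun h => hxs ((mem_powersetCard.1 hB₂).1 h)
    rw [← erase_insert hx₁, ← erase_insert hx₂, h]
  · refine disjoint_left.2 fun B hB hB' => ?_
    obtain ⟨B₀, -, rfl⟩ := mem_image.1 hB'
    exact hxs ((mem_powersetCard.1 hB).1 (mem_insert_self x B₀))

lemma qSubsetCount_zero (s : Finset α) : qSubsetCount s 0 = 1 := by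
  simp [qSubsetCount]

theorem qSubsetCount_mul_qFact (s : Finset α) :
    ∀ a b, #s = a + b → qSubsetCount s a * qFact a * qFact b = qFact (a + b) := by
  induction s using induction_on_max with
  | empty =>
    intro a b h
    obtain ⟨rfl, rfl⟩ : a = 0 ∧ b = 0 := by simpa [eq_comm] using h
    simp [qSubsetCount_zero, qFact_zero]
  | insert x s hx ih =>
    intro a b h
    rw [card_insert_of_notMem fun hxs => (hx x hxs).false] at h
    match a, b with
    | 0, b => simp [qSubsetCount_zero, qFact_zero]
    | k + 1, 0 =>
      have hS : qSubsetCount s (k + 1) = 0 := by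
        rw [qSubsetCount, powersetCard_eq_empty.2 (by omega), sum_empty]
      have hT : (k : ℤ) - #s = 0 := by omega
      have ih₀ := ih k 0 (by omega)
      rw [qSubsetCount_insert_max_succ hx, hS, hT, T_zero, qFact_succ]
      simp only [qFact_zero, add_zero, mul_one] at ih₀ ⊢
      linear_combination qInt (k + 1) * ih₀
    | k + 1, j + 1 =>
      have ih₁ := ih (k + 1) j (by omega)
      have ih₂ := ih k (j + 1) (by omega)
      have hT : (k : ℤ) - #s = -(j + 1 : ℕ) := by omega
      have hpascal : qFact (k + 1 + (j + 1)) = qFact (k + 1 + j) *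
          (T (-(j + 1 : ℕ)) * qInt (k + 1) + T (k + 1 : ℕ) * qInt (j + 1)) := by
        rw [← qInt_add]; exact qFact_succ _
      rw [qSubsetCount_insert_max_succ hx, hT, hpascal]
      rw [show k + (j + 1) = k + 1 + j by omega] at ih₂
      simp only [qFact_succ k, qFact_succ j] at ih₁ ih₂ ⊢
      push_cast at ih₁ ih₂ ⊢
      linear_combination
        T ((k : ℤ) + 1) * qInt (j + 1) * ih₁ + T (-((j : ℤ) + 1)) * qInt (k + 1) * ih₂

end RankBalance

lemma moySet_card (N : ℕ) : #(moySet N) = N := by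
  rw [moySet, card_image_of_injective _ fun a b h => by omega, card_range]

lemma moyPi_eq_sum (A B : Finset ℤ) : moyPi A B = ∑ b ∈ B, #{a ∈ A | b < a} := by
  rw [moyPi, card_filter, sum_product, sum_comm]
  exact sum_congr rfl fun b _ => by rw [card_filter]

lemma card_filter_moySet (N : ℕ) (p : ℤ → Prop) [DecidablePred p] :
    #{a ∈ moySet N | p a} = #((range N).filter fun i : ℕ => p (2 * i - N + 1)) := by
  rw [moySet, filter_image, card_image_of_injective _ fun i j h => by omega]

lemma rankBalance_moySet {N : ℕ} {b : ℤ} (hb : b ∈ moySet N) :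
    rankBalance (moySet N) b = -b := by
  obtain ⟨p, hp, rfl⟩ := mem_image.1 hb
  have hp := mem_range.1 hp
  have habove :
      (range N).filter (fun i : ℕ => 2 * (p : ℤ) - N + 1 < 2 * i - N + 1) = Ioo p N := by
    ext i; simp only [mem_filter, mem_range, mem_Ioo]; omega
  have hbelow :
      (range N).filter (fun i : ℕ => 2 * (i : ℤ) - N + 1 < 2 * p - N + 1) = range p := by
    ext i; simp only [mem_filter, mem_range]; omega
  rw [rankBalance, card_filter_moySet, card_filter_moySet, habove, hbelow, Nat.card_Ioo,
    card_range]
  omega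

theorem moy_loop_evaluation_general (N m n : ℕ) (hmn : m + n ≤ N)
    (A : Finset ℤ) (hA : A ⊆ moySet N) (hAcard : A.card = m) :
    (∑ B ∈ (moySet N \ A).powersetCard n,
        T (((m : ℤ) * n) - 2 * (moyPi A B : ℤ) - ∑ b ∈ B, b))
        * qFact n * qFact (N - m - n)
      = qFact (N - m) := by
  set C := moySet N \ A
  have hC : #C = n + (N - m - n) := by
    rw [card_sdiff_of_subset hA, moySet_card, hAcard]; omega
  have hexp : ∀ B ∈ C.powersetCard n,
      (m : ℤ) * n - 2 * (moyPi A B : ℤ) - ∑ b ∈ B, b = ∑ b ∈ B, rankBalance C b := by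
    intro B hB
    obtain ⟨hBC, hBcard⟩ := mem_powersetCard.1 hB
    have hterm : ∀ b ∈ B, rankBalance C b = m - 2 * #{a ∈ A | b < a} - b := fun b hb => by
      have hb := mem_sdiff.1 (hBC hb)
      rw [rankBalance_sdiff hA, rankBalance_moySet hb.1, rankBalance_of_notMem hb.2, hAcard]
      ring
    rw [sum_congr rfl hterm, moyPi_eq_sum]
    simp only [sum_sub_distrib, sum_const, hBcard, nsmul_eq_mul, ← mul_sum]
    push_cast; ring
  rw [sum_congr rfl fun B hB => congrArg T (hexp B hB)]
  exact (qSubsetCount_mul_qFact C n _ hC).trans (congrArg qFact (by omega))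

theorem moy_loop_evaluation (N m n : ℕ) (hN : 1 ≤ N) (hmn : m + n ≤ N)
    (A : Finset ℤ) (hA : A ⊆ moySet N) (hAcard : A.card = m) :
    (∑ B ∈ (moySet N \ A).powersetCard n,
        T (((m : ℤ) * n) - 2 * (moyPi A B : ℤ) - ∑ b ∈ B, b))
        * qFact n * qFact (N - m - n)
      = qFact (N - m) :=
  moy_loop_evaluation_general N m n hmn A hA hAcard
end
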